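/- arXiv:1805.10277 — 2 statements merged into one kernel-verified Lean document; each statement's English description precedes it below -/
import Mathlib

section
/- The mechanism M(D) = argmax_i (q_i(D) + η_i), where η_1, …, η_k are independent Laplace random variables with scale 2/ε and each q_i is a counting query satisfying 0 ≤ q_i(D₁) − q_i(D₂) ≤ 1 componentwise for adjacent D₁ ~ D₂ (i.e., adding one record can increase each count by at most 1), satisfies ε-differential privacy (Report Noisy Max). -/
open MeasureTheory Real
open scoped ENNReal

noncomputable def laplaceDensity (b x : ℝ) : ℝ := (1 / (2 * b)) * Real.exp (-|x| / b)

noncomputable def laplaceMeasure (b : ℝ) : Measure ℝ :=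
  MeasureTheory.volume.withDensity fun x => ENNReal.ofReal (laplaceDensity b x)

lemma measurable_laplaceDensity (b : ℝ) : Measurable (laplaceDensity b) := by
  unfold laplaceDensity; fun_prop

lemma lintegral_fin_prod {n : ℕ} (μ : Measure ℝ) [SigmaFinite μ] (f : Fin n → ℝ → ℝ≥0∞)
    (hf : ∀ i, Measurable (f i)) :
    ∫⁻ x : Fin n → ℝ, ∏ i, f i (x i) ∂(Measure.pi fun _ => μ) = ∏ i, ∫⁻ y, f i y ∂μ := by
  induction n with
  | zero => simp [Measure.pi_empty_univ]
  | succ n ih =>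
    rw [← ((measurePreserving_piFinSuccAbove (fun _ : Fin (n+1) => μ) 0).symm).lintegral_comp_emb
      (MeasurableEquiv.measurableEmbedding _)]
    simp only [MeasurableEquiv.piFinSuccAbove_symm_apply, Fin.insertNthEquiv, Equiv.coe_fn_mk,
      Fin.insertNth_zero, Fin.prod_univ_succ, Fin.cons_zero, Fin.cons_succ, Fin.zero_succAbove,
      cast_eq]
    have h2 := lintegral_prod_mul (μ := μ) (ν := Measure.pi fun _ : Fin n => μ)
      (f := f 0) (g := fun y : Fin n → ℝ => ∏ x, f x.succ (y x)) (hf 0).aemeasurable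
      (Finset.measurable_prod Finset.univ fun i _ =>
        (hf i.succ).comp (measurable_pi_apply i)).aemeasurable
    rw [h2, ih (fun i => f i.succ) (fun i => hf _)]

lemma pi_withDensity_ofReal {n : ℕ} (g : ℝ → ℝ) (hg : Measurable g) :
    (Measure.pi fun _ : Fin n => volume.withDensity fun x => ENNReal.ofReal (g x)) =
      (volume : Measure (Fin n → ℝ)).withDensity fun x => ∏ j, ENNReal.ofReal (g (x j)) := by
  refine Measure.pi_eq fun s hs => ?_
  rw [withDensity_apply _ (MeasurableSet.univ_pi hs),
    ← lintegral_indicator (MeasurableSet.univ_pi hs) _]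
  have hpt : ∀ x : Fin n → ℝ,
      (Set.univ.pi s).indicator (fun x : Fin n → ℝ => ∏ j, ENNReal.ofReal (g (x j))) x =
        ∏ j, ((s j).indicator fun y => ENNReal.ofReal (g y)) (x j) := by
    intro x
    by_cases hx : x ∈ Set.univ.pi s
    · rw [Set.indicator_of_mem hx]
      exact Finset.prod_congr rfl fun j _ =>
        (Set.indicator_of_mem (hx j (Set.mem_univ j)) (fun y => ENNReal.ofReal (g y))).symm
    · rw [Set.indicator_of_notMem hx]
      obtain ⟨j, hj⟩ : ∃ j, x j ∉ s j := by simpa [Set.mem_pi] using hx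
      exact (Finset.prod_eq_zero (Finset.mem_univ j)
        (by simp [Set.indicator_of_notMem hj])).symm
  rw [lintegral_congr hpt, volume_pi,
    lintegral_fin_prod volume _ (fun j => (hg.ennreal_ofReal).indicator (hs j))]
  exact Finset.prod_congr rfl fun j _ => by
    rw [lintegral_indicator (hs j) _, ← withDensity_apply _ (hs j)]

lemma hyperplane_null {k : ℕ} {i j : Fin k} (hij : j ≠ i) (c : ℝ) :
    (volume : Measure (Fin k → ℝ)) {x | x i = x j + c} = 0 := by
  set L : (Fin k → ℝ) →ₗ[ℝ] ℝ := (LinearMap.proj i : (Fin k → ℝ) →ₗ[ℝ] ℝ) - (LinearMap.proj j : (Fin k → ℝ) →ₗ[ℝ] ℝ) with hL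
  have hK : LinearMap.ker L ≠ ⊤ := by
    intro h
    have h1 : Pi.single i (1:ℝ) ∈ LinearMap.ker L := h ▸ Submodule.mem_top
    rw [LinearMap.mem_ker, hL] at h1
    simp [LinearMap.sub_apply, LinearMap.proj_apply, Pi.single_eq_same,
      Pi.single_eq_of_ne hij] at h1
  have hset : {x : Fin k → ℝ | x i = x j + c} =
      (fun x => x + -(Pi.single i c)) ⁻¹' ((LinearMap.ker L : Submodule ℝ (Fin k → ℝ)) : Set (Fin k → ℝ)) := by
    ext x
    simp only [Set.mem_preimage, SetLike.mem_coe, LinearMap.mem_ker, hL, LinearMap.sub_apply,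
      LinearMap.proj_apply, Pi.add_apply, Pi.neg_apply, Pi.single_eq_same,
      Pi.single_eq_of_ne hij, Set.mem_setOf_eq]
    constructor <;> intro h <;> [linarith; linarith]
  rw [hset, measure_preimage_add_right]
  exact Measure.addHaar_submodule volume _ hK

lemma laplaceDensity_shift {b : ℝ} (hb : 0 < b) (y : ℝ) :
    laplaceDensity b (y - 1) ≤ Real.exp (1 / b) * laplaceDensity b y := by
  have key : |y| - |y - 1| ≤ 1 := by
    have h := abs_sub_abs_le_abs_sub y (y - 1)
    simpa using h
  unfold laplaceDensity
  have hrw : Real.exp (1 / b) * ((1 / (2 * b)) * Real.exp (-|y| / b)) =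
      (1 / (2 * b)) * Real.exp (1 / b + -|y| / b) := by
    rw [Real.exp_add]; ring
  rw [hrw]
  apply mul_le_mul_of_nonneg_left _ (by positivity)
  apply Real.exp_le_exp.mpr
  rw [show (1 : ℝ) / b + -|y| / b = (1 - |y|) / b by ring]
  exact (div_le_div_iff_of_pos_right hb).mpr (by linarith)

lemma rnm_key {k : ℕ} {b : ℝ} (hb : 0 < b)
    (am : (Fin k → ℝ) → Fin k) (ham : ∀ (v : Fin k → ℝ) (i : Fin k), v i ≤ v (am v)) (hammeas : Measurable am)
    (w w' : Fin k → ℝ) (i : Fin k) (h : ∀ j, w i - w' i ≤ 1 + (w j - w' j)) :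
    (Measure.pi fun _ : Fin k => laplaceMeasure b) {x | am (fun j => w j + x j) = i} ≤
      ENNReal.ofReal (Real.exp (1 / b)) *
        (Measure.pi fun _ : Fin k => laplaceMeasure b) {x | am (fun j => w' j + x j) = i} := by
  classical
  set f : ℝ → ℝ≥0∞ := fun x => ENNReal.ofReal (laplaceDensity b x) with hf
  have hfm : Measurable f := (measurable_laplaceDensity b).ennreal_ofReal
  set F : (Fin k → ℝ) → ℝ≥0∞ := fun x => ∏ j, f (x j) with hF
  have hFm : Measurable F :=
    Finset.measurable_prod _ fun j _ => hfm.comp (measurable_pi_apply j)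
  have hν : (Measure.pi fun _ : Fin k => laplaceMeasure b) = volume.withDensity F := by
    simp only [laplaceMeasure]
    exact pi_withDensity_ofReal _ (measurable_laplaceDensity b)
  have hm' : Measurable (fun x : Fin k → ℝ => am (fun j => w' j + x j)) :=
    hammeas.comp (measurable_pi_lambda _ fun j => measurable_const.add (measurable_pi_apply j))
  set A : Set (Fin k → ℝ) := {x | am (fun j => w j + x j) = i} with hA
  set A' : Set (Fin k → ℝ) := {x | am (fun j => w' j + x j) = i} with hA'
  have hA'meas : MeasurableSet A' := hm' (measurableSet_singleton i)
  set Ws : Set (Fin k → ℝ) := {x | ∀ j, j ≠ i → w j + x j < w i + x i} with hWs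
  set T : Set (Fin k → ℝ) := ⋃ j ∈ {j : Fin k | j ≠ i}, {x | x i = x j + (w j - w i)} with hT
  set S : (Fin k → ℝ) → Fin k → ℝ := fun x => x + Pi.single i 1 with hS
  -- Step 1 : A ⊆ Ws ∪ T
  have hsub1 : A ⊆ Ws ∪ T := by
    intro x hx
    by_cases hstr : ∀ j, j ≠ i → w j + x j < w i + x i
    · exact Or.inl hstr
    · push_neg at hstr
      obtain ⟨j, hji, hle⟩ := hstr
      have hle' : w j + x j ≤ w i + x i := by
        have h0 := ham (fun j => w j + x j) j
        rw [show am (fun j => w j + x j) = i from hx] at h0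
        exact h0
      refine Or.inr (Set.mem_biUnion hji ?_)
      show x i = x j + (w j - w i)
      have : w j + x j = w i + x i := le_antisymm hle' hle
      linarith
  -- Step 2 : T is null
  have hTnull : (volume.withDensity F) T = 0 := by
    apply withDensity_absolutelyContinuous volume F
    rw [hT]
    apply measure_biUnion_null_iff (Set.to_countable _) |>.mpr
    intro j hj
    exact hyperplane_null (by exact hj) _
  -- Step 3 : Ws ⊆ S ⁻¹' A'
  have hsub2 : Ws ⊆ S ⁻¹' A' := by
    intro x hx
    have hstrict : ∀ j, j ≠ i → w' j + S x j < w' i + S x i := by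
      intro j hj
      have h1 := hx j hj
      have h2 := h j
      simp only [hS, Pi.add_apply, Pi.single_eq_same, Pi.single_eq_of_ne hj]
      linarith
    show am (fun j => w' j + S x j) = i
    by_contra hne
    exact absurd (ham (fun j => w' j + S x j) i) (not_le.mpr (hstrict _ hne))
  -- Step 4 : pointwise density shift
  have hshift : ∀ x : Fin k → ℝ,
      F (x - Pi.single i 1) ≤ ENNReal.ofReal (Real.exp (1 / b)) * F x := by
    intro x
    have h1 : f (x i - 1) ≤ ENNReal.ofReal (Real.exp (1 / b)) * f (x i) := by
      rw [hf, ← ENNReal.ofReal_mul (Real.exp_nonneg _)]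
      exact ENNReal.ofReal_le_ofReal (laplaceDensity_shift hb (x i))
    set z : Fin k → ℝ := x - Pi.single i 1 with hz
    have hzi : z i = x i - 1 := by rw [hz]; simp
    have hcongr : ∀ j ∈ Finset.univ.erase i, f (z j) = f (x j) := by
      intro j hj
      rw [hz]
      congr 1
      simp [Pi.single_eq_of_ne (Finset.mem_erase.mp hj).1]
    calc F z
        = f (z i) * ∏ j ∈ Finset.univ.erase i, f (z j) :=
          (Finset.mul_prod_erase Finset.univ (fun j => f (z j)) (Finset.mem_univ i)).symm
      _ = f (x i - 1) * ∏ j ∈ Finset.univ.erase i, f (x j) := by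
          rw [Finset.prod_congr rfl hcongr, hzi]
      _ ≤ (ENNReal.ofReal (Real.exp (1 / b)) * f (x i)) * ∏ j ∈ Finset.univ.erase i, f (x j) :=
          mul_le_mul_left h1 _
      _ = ENNReal.ofReal (Real.exp (1 / b)) * F x := by
          rw [mul_assoc, Finset.mul_prod_erase Finset.univ (fun j => f (x j)) (Finset.mem_univ i)]
  -- Step 5 : translation bound
  have hSA'meas : MeasurableSet (S ⁻¹' A') := (measurable_id.add_const _) hA'meas
  have htrans : (volume.withDensity F) (S ⁻¹' A') ≤
      ENNReal.ofReal (Real.exp (1 / b)) * (volume.withDensity F) A' := by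
    rw [withDensity_apply _ hSA'meas, withDensity_apply _ hA'meas,
      ← lintegral_indicator hSA'meas, ← lintegral_indicator hA'meas]
    calc ∫⁻ x, (S ⁻¹' A').indicator F x ∂volume
        = ∫⁻ x, A'.indicator (fun y => F (y - Pi.single i 1)) (x + Pi.single i 1) ∂volume := by
          apply lintegral_congr
          intro x
          by_cases hx : S x ∈ A'
          · rw [Set.indicator_of_mem (by exact hx), Set.indicator_of_mem (by exact hx)]
            simp [hS]
          · rw [Set.indicator_of_notMem (by exact hx), Set.indicator_of_notMem (by exact hx)]
      _ = ∫⁻ x, A'.indicator (fun y => F (y - Pi.single i 1)) x ∂volume :=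
          lintegral_add_right_eq_self _ _
      _ ≤ ∫⁻ x, ENNReal.ofReal (Real.exp (1 / b)) * A'.indicator F x ∂volume := by
          apply lintegral_mono
          intro x
          by_cases hx : x ∈ A'
          · simp only [Set.indicator_of_mem hx]
            exact hshift x
          · simp only [Set.indicator_of_notMem hx, mul_zero, le_refl]
      _ = ENNReal.ofReal (Real.exp (1 / b)) * ∫⁻ x, A'.indicator F x ∂volume :=
          lintegral_const_mul _ (hFm.indicator hA'meas)
  -- Assemble
  rw [hν]
  calc (volume.withDensity F) A
      ≤ (volume.withDensity F) (Ws ∪ T) := measure_mono hsub1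
    _ ≤ (volume.withDensity F) Ws + (volume.withDensity F) T := measure_union_le _ _
    _ = (volume.withDensity F) Ws := by rw [hTnull, add_zero]
    _ ≤ (volume.withDensity F) (S ⁻¹' A') := measure_mono hsub2
    _ ≤ ENNReal.ofReal (Real.exp (1 / b)) * (volume.withDensity F) A' := htrans

lemma rnm_compare {k : ℕ} (ν : Measure (Fin k → ℝ)) (c : ℝ≥0∞)
    (g₁ g₂ : (Fin k → ℝ) → Fin k) (hg₁ : Measurable g₁) (hg₂ : Measurable g₂)
    (hpt : ∀ i : Fin k, ν (g₁ ⁻¹' {i}) ≤ c * ν (g₂ ⁻¹' {i}))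
    (E : Set (Fin k)) : ν (g₁ ⁻¹' E) ≤ c * ν (g₂ ⁻¹' E) := by
  classical
  have hdecomp : ∀ g : (Fin k → ℝ) → Fin k, Measurable g →
      ν (g ⁻¹' E) = ∑ i ∈ (Set.toFinite E).toFinset, ν (g ⁻¹' {i}) := by
    intro g hg
    rw [show g ⁻¹' E = ⋃ i ∈ (Set.toFinite E).toFinset, g ⁻¹' {i} by
      ext x
      simp only [Set.mem_preimage, Set.mem_iUnion, Set.Finite.mem_toFinset,
        Set.mem_singleton_iff, exists_prop]
      exact ⟨fun h => ⟨g x, h, rfl⟩, fun ⟨i, hi, h2⟩ => h2 ▸ hi⟩]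
    rw [measure_biUnion_finset ?_ fun i _ => hg (measurableSet_singleton i)]
    intro i _ j _ hij
    apply Set.disjoint_left.mpr
    intro x hx1 hx2
    exact hij ((Set.mem_preimage.mp hx1).symm.trans (Set.mem_preimage.mp hx2))
  rw [hdecomp g₁ hg₁, hdecomp g₂ hg₂, Finset.mul_sum]
  exact Finset.sum_le_sum fun i _ => hpt i

/-- **Report Noisy Max is ε-differentially private.**
The mechanism `M(D) = argmax_i (qᵢ(D) + ηᵢ)`, where `η₁, …, η_k` are i.i.d. `Lap(2/ε)` and the
counting queries satisfy `0 ≤ qᵢ(D₁) − qᵢ(D₂) ≤ 1` componentwise for adjacent `D₁ ~ D₂`,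
satisfies `ε`-differential privacy (in both directions of the probability-ratio bound).
Here `am` is any measurable argmax selector (ties have probability zero). -/
theorem report_noisy_max_dp {𝒟 : Type*} (Adj : 𝒟 → 𝒟 → Prop)
    (k : ℕ) (hk : 0 < k) (q : Fin k → 𝒟 → ℝ) (ε : ℝ) (hε : 0 < ε)
    (am : (Fin k → ℝ) → Fin k) (ham : ∀ (v : Fin k → ℝ) (i : Fin k), v i ≤ v (am v)) (hammeas : Measurable am)
    (hsens : ∀ D₁ D₂, Adj D₁ D₂ → ∀ i, 0 ≤ q i D₁ - q i D₂ ∧ q i D₁ - q i D₂ ≤ 1) :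
    ∀ D₁ D₂, Adj D₁ D₂ → ∀ E : Set (Fin k), MeasurableSet E →
      ((Measure.pi fun _ : Fin k => laplaceMeasure (2 / ε)).map
          (fun η => am (fun i => q i D₁ + η i))) E ≤
        ENNReal.ofReal (Real.exp ε) *
          ((Measure.pi fun _ : Fin k => laplaceMeasure (2 / ε)).map
            (fun η => am (fun i => q i D₂ + η i))) E ∧
      ((Measure.pi fun _ : Fin k => laplaceMeasure (2 / ε)).map
          (fun η => am (fun i => q i D₂ + η i))) E ≤
        ENNReal.ofReal (Real.exp ε) *
          ((Measure.pi fun _ : Fin k => laplaceMeasure (2 / ε)).map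
            (fun η => am (fun i => q i D₁ + η i))) E := by
  intro D₁ D₂ hadj E hE
  have hb : (0:ℝ) < 2 / ε := by positivity
  have hmg : ∀ D : 𝒟, Measurable (fun η : Fin k → ℝ => am (fun i => q i D + η i)) := fun D =>
    hammeas.comp (measurable_pi_lambda _ fun i => measurable_const.add (measurable_pi_apply i))
  have hcexp : ENNReal.ofReal (Real.exp (1 / (2 / ε))) ≤ ENNReal.ofReal (Real.exp ε) := by
    apply ENNReal.ofReal_le_ofReal
    apply Real.exp_le_exp.mpr
    rw [one_div, inv_div]
    linarith
  have hc := hsens D₁ D₂ hadj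
  have key : ∀ (wa wb : Fin k → ℝ),
      (∀ i j : Fin k, wa i - wb i ≤ 1 + (wa j - wb j)) →
      ∀ E' : Set (Fin k),
      (Measure.pi fun _ : Fin k => laplaceMeasure (2 / ε))
          ((fun η : Fin k → ℝ => am (fun i => wa i + η i)) ⁻¹' E') ≤
        ENNReal.ofReal (Real.exp ε) *
          (Measure.pi fun _ : Fin k => laplaceMeasure (2 / ε))
            ((fun η : Fin k → ℝ => am (fun i => wb i + η i)) ⁻¹' E') := by
    intro wa wb hw E'
    apply rnm_compare _ _ _ _
      (hammeas.comp (measurable_pi_lambda _ fun i => measurable_const.add (measurable_pi_apply i)))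
      (hammeas.comp (measurable_pi_lambda _ fun i => measurable_const.add (measurable_pi_apply i)))
    intro i
    calc (Measure.pi fun _ : Fin k => laplaceMeasure (2 / ε))
          ((fun η : Fin k → ℝ => am (fun i => wa i + η i)) ⁻¹' {i})
        ≤ ENNReal.ofReal (Real.exp (1 / (2 / ε))) *
          (Measure.pi fun _ : Fin k => laplaceMeasure (2 / ε))
            ((fun η : Fin k → ℝ => am (fun i => wb i + η i)) ⁻¹' {i}) := by
          exact rnm_key hb am ham hammeas wa wb i (fun j => hw i j)
      _ ≤ _ := mul_le_mul_left hcexp _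
  rw [Measure.map_apply (hmg D₁) hE, Measure.map_apply (hmg D₂) hE]
  constructor
  · exact key (fun i => q i D₁) (fun i => q i D₂)
      (fun i j => by have h1 := hc i; have h2 := hc j; linarith [h1.1, h1.2, h2.1, h2.2]) E
  · exact key (fun i => q i D₂) (fun i => q i D₁)
      (fun i j => by have h1 := hc i; have h2 := hc j; linarith [h1.1, h1.2, h2.1, h2.2]) E
end

section
/- Stochastic monotonicity for Fisher's test under the alternative: let C₁ ~ Binomial(n, p₁) and C₂ ~ Binomial(n, p₂) be independent. If p₁ ≤ p₂ (with 0 < p₁, p₂ < 1), then for every s and every threshold c, P(C₁ ≥ c | C₁ + C₂ = s) ≤ P(H ≥ c), where H ~ Hypergeometric(2n, n, s). -/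
/-!
Conditionally on `C₁ + C₂ = s`, the law of `C₁` has weights
`C(n,k) C(n,s-k) · p₁ᵏ (1-p₁)ⁿ⁻ᵏ p₂ˢ⁻ᵏ (1-p₂)ⁿ⁻⁽ˢ⁻ᵏ⁾`, i.e. it is the central hypergeometric
law tilted by a factor proportional to `θᵏ` with `θ = p₁(1-p₂) / (p₂(1-p₁)) ≤ 1`.
A tilt that is nonincreasing on the support moves mass from the upper tail to the lower one,
and Vandermonde's identity identifies the normaliser of the untilted weights with `C(2n,s)`.
-/

open MeasureTheory ProbabilityTheory Finset

section Tilt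

variable {ι : Type*} [LinearOrder ι] {S : Finset ι} {a r : ι → ℝ}

theorem sum_filter_mul_mul_sum_le_of_antitoneOn (ha : ∀ k ∈ S, 0 ≤ a k)
    (hr : AntitoneOn r {k | k ∈ S ∧ a k ≠ 0}) (c : ι) :
    (∑ k ∈ S with c ≤ k, a k * r k) * ∑ k ∈ S, a k ≤
      (∑ k ∈ S with c ≤ k, a k) * ∑ k ∈ S, a k * r k := by
  have cross : (∑ k ∈ S with c ≤ k, a k * r k) * ∑ j ∈ S with ¬c ≤ j, a j ≤
      (∑ k ∈ S with c ≤ k, a k) * ∑ j ∈ S with ¬c ≤ j, a j * r j := by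
    rw [sum_mul_sum, sum_mul_sum]
    refine sum_le_sum fun k hk => sum_le_sum fun j hj => ?_
    rw [mem_filter] at hk hj
    by_cases hzero : a k = 0 ∨ a j = 0
    · rcases hzero with h | h <;> simp [h]
    rw [not_or] at hzero
    have hrjk : r k ≤ r j :=
      hr ⟨hj.1, hzero.2⟩ ⟨hk.1, hzero.1⟩ (le_of_lt (lt_of_not_ge hj.2 |>.trans_le hk.2))
    calc a k * r k * a j = (a k * a j) * r k := by ring
      _ ≤ (a k * a j) * r j := by gcongr; exact mul_nonneg (ha k hk.1) (ha j hj.1)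
      _ = a k * (a j * r j) := by ring
  rw [← sum_filter_add_sum_filter_not S (c ≤ ·) a,
    ← sum_filter_add_sum_filter_not S (c ≤ ·) (fun k => a k * r k), mul_add, mul_add]
  linarith [mul_comm (∑ k ∈ S with c ≤ k, a k * r k) (∑ k ∈ S with c ≤ k, a k)]

theorem sum_filter_mul_div_sum_le_of_antitoneOn (ha : ∀ k ∈ S, 0 ≤ a k)
    (hr₀ : ∀ k ∈ S, 0 ≤ r k) (hr : AntitoneOn r {k | k ∈ S ∧ a k ≠ 0}) (c : ι) :
    (∑ k ∈ S with c ≤ k, a k * r k) / ∑ k ∈ S, a k * r k ≤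
      (∑ k ∈ S with c ≤ k, a k) / ∑ k ∈ S, a k := by
  have har : ∀ k ∈ S, 0 ≤ a k * r k := fun k hk => mul_nonneg (ha k hk) (hr₀ k hk)
  rcases (sum_nonneg har).eq_or_lt with hzero | hpos
  · rw [← hzero, div_zero]
    exact div_nonneg (sum_nonneg fun k hk => ha k (mem_filter.1 hk).1) (sum_nonneg ha)
  have ha_pos : 0 < ∑ k ∈ S, a k := by
    refine (sum_nonneg ha).lt_of_ne fun h => hpos.ne' ?_
    refine sum_eq_zero fun k hk => ?_
    rw [(sum_eq_zero_iff_of_nonneg ha).1 h.symm k hk, zero_mul]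
  rw [div_le_div_iff₀ hpos ha_pos]
  exact sum_filter_mul_mul_sum_le_of_antitoneOn ha hr c

end Tilt

theorem measureReal_setOf_inter_add_eq_sum {Ω : Type*} [MeasurableSpace Ω] {μ : Measure Ω}
    [IsFiniteMeasure μ] {C₁ C₂ : Ω → ℕ} (hm₁ : Measurable C₁) (hm₂ : Measurable C₂)
    (hindep : IndepFun C₁ C₂ μ) (P : ℕ → Prop) [DecidablePred P] (s : ℕ) :
    μ.real ({ω | P (C₁ ω)} ∩ {ω | C₁ ω + C₂ ω = s}) =
      ∑ k ∈ range (s + 1) with P k, μ.real {ω | C₁ ω = k} * μ.real {ω | C₂ ω = s - k} := by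
  have hunion : {ω | P (C₁ ω)} ∩ {ω | C₁ ω + C₂ ω = s} =
      ⋃ k ∈ (range (s + 1)).filter P, {ω | C₁ ω = k} ∩ {ω | C₂ ω = s - k} := by
    ext ω
    simp only [Set.mem_inter_iff, Set.mem_ofPred_eq, Set.mem_iUnion, mem_filter, mem_range]
    constructor
    · rintro ⟨hP, hsum⟩
      exact ⟨C₁ ω, ⟨by omega, hP⟩, rfl, by omega⟩
    · rintro ⟨k, ⟨hk, hP⟩, rfl, h₂⟩
      exact ⟨hP, by omega⟩
  have hdisj : (↑((range (s + 1)).filter P) : Set ℕ).PairwiseDisjoint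
      fun k => {ω | C₁ ω = k} ∩ {ω | C₂ ω = s - k} :=
    fun j _ k _ hjk => Set.disjoint_left.2 fun ω hj hk => hjk (hj.1.symm.trans hk.1)
  rw [hunion, measureReal_biUnion_finset hdisj
    fun k _ => (hm₁ (measurableSet_singleton k)).inter (hm₂ (measurableSet_singleton _))]
  refine sum_congr rfl fun k _ => ?_
  simp only [measureReal_def]
  rw [← ENNReal.toReal_mul]
  congr 1
  exact hindep.measure_inter_preimage_eq_mul _ _ (measurableSet_singleton k)
    (measurableSet_singleton (s - k))

theorem sum_range_choose_mul_choose_sub (n s : ℕ) :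
    ∑ k ∈ range (s + 1), (n.choose k : ℝ) * n.choose (s - k) = (2 * n).choose s := by
  rw [two_mul, Nat.add_choose_eq, Nat.sum_antidiagonal_eq_sum_range_succ_mk]
  push_cast
  rfl

noncomputable def pairLikelihood (n s : ℕ) (p₁ p₂ : ℝ) (k : ℕ) : ℝ :=
  p₁ ^ k * (1 - p₁) ^ (n - k) * (p₂ ^ (s - k) * (1 - p₂) ^ (n - (s - k)))

theorem pairLikelihood_nonneg {n s : ℕ} {p₁ p₂ : ℝ} (hp₁0 : 0 ≤ p₁) (hp₁1 : p₁ ≤ 1)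
    (hp₂0 : 0 ≤ p₂) (hp₂1 : p₂ ≤ 1) (k : ℕ) : 0 ≤ pairLikelihood n s p₁ p₂ k := by
  have : 0 ≤ 1 - p₁ := by linarith
  have : 0 ≤ 1 - p₂ := by linarith
  unfold pairLikelihood
  positivity

theorem pairLikelihood_antitoneOn {n s : ℕ} {p₁ p₂ : ℝ} (hp₁0 : 0 ≤ p₁) (hle : p₁ ≤ p₂)
    (hp₂1 : p₂ ≤ 1) : AntitoneOn (pairLikelihood n s p₁ p₂) (Set.Icc (s - n) (min n s)) := by
  intro j hj k hk hjk
  simp only [Set.mem_Icc, le_min_iff] at hj hk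
  have hq₁ : 0 ≤ 1 - p₁ := by linarith
  have hq₂ : 0 ≤ 1 - p₂ := by linarith
  have hp₂0 : 0 ≤ p₂ := hp₁0.trans hle
  have e₁ : p₁ ^ k = p₁ ^ j * p₁ ^ (k - j) := by rw [← pow_add]; congr 1; omega
  have e₂ : (1 - p₁) ^ (n - j) = (1 - p₁) ^ (n - k) * (1 - p₁) ^ (k - j) := by
    rw [← pow_add]; congr 1; omega
  have e₃ : p₂ ^ (s - j) = p₂ ^ (s - k) * p₂ ^ (k - j) := by rw [← pow_add]; congr 1; omega
  have e₄ : (1 - p₂) ^ (n - (s - k)) = (1 - p₂) ^ (n - (s - j)) * (1 - p₂) ^ (k - j) := by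
    rw [← pow_add]; congr 1; omega
  set X := p₁ ^ j * (1 - p₁) ^ (n - k) * p₂ ^ (s - k) * (1 - p₂) ^ (n - (s - j))
  have hX : 0 ≤ X := by positivity
  calc pairLikelihood n s p₁ p₂ k = X * (p₁ * (1 - p₂)) ^ (k - j) := by
        rw [pairLikelihood, e₁, e₄, mul_pow]; ring
    _ ≤ X * (p₂ * (1 - p₁)) ^ (k - j) :=
        mul_le_mul_of_nonneg_left (pow_le_pow_left₀ (mul_nonneg hp₁0 hq₂) (by nlinarith) _) hX
    _ = pairLikelihood n s p₁ p₂ j := by rw [pairLikelihood, e₂, e₃, mul_pow]; ring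

theorem fisher_tail_monotone_general
    {Ω : Type*} [MeasurableSpace Ω] (μ : Measure Ω) [IsProbabilityMeasure μ]
    (n s : ℕ)
    (p₁ p₂ : ℝ) (hp₁0 : 0 < p₁) (hp₂1 : p₂ < 1) (hle : p₁ ≤ p₂)
    (C₁ C₂ : Ω → ℕ) (hm₁ : Measurable C₁) (hm₂ : Measurable C₂)
    (hindep : IndepFun C₁ C₂ μ)
    (h₁ : ∀ k, (μ {ω | C₁ ω = k}).toReal = (n.choose k : ℝ) * p₁ ^ k * (1 - p₁) ^ (n - k))
    (h₂ : ∀ k, (μ {ω | C₂ ω = k}).toReal = (n.choose k : ℝ) * p₂ ^ k * (1 - p₂) ^ (n - k)) :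
    ∀ c : ℕ,
      (μ ({ω | c ≤ C₁ ω} ∩ {ω | C₁ ω + C₂ ω = s})).toReal /
          (μ {ω | C₁ ω + C₂ ω = s}).toReal ≤
        (∑ k ∈ Finset.range (s + 1),
          if c ≤ k then (n.choose k : ℝ) * (n.choose (s - k)) else 0) /
          ((2 * n).choose s) := by
  intro c
  have hweight : ∀ k, μ.real {ω | C₁ ω = k} * μ.real {ω | C₂ ω = s - k} =
      (n.choose k : ℝ) * n.choose (s - k) * pairLikelihood n s p₁ p₂ k := by
    intro k
    rw [measureReal_def, measureReal_def, h₁, h₂, pairLikelihood]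
    ring
  have hden := measureReal_setOf_inter_add_eq_sum hm₁ hm₂ hindep (fun _ => True) s
  simp only [Set.ofPred_true, Set.univ_inter, filter_true] at hden
  rw [← measureReal_def, ← measureReal_def, hden,
    measureReal_setOf_inter_add_eq_sum hm₁ hm₂ hindep (c ≤ ·) s,
    ← sum_range_choose_mul_choose_sub, ← sum_filter]
  simp only [hweight]
  refine sum_filter_mul_div_sum_le_of_antitoneOn
    (a := fun k => (n.choose k : ℝ) * n.choose (s - k)) (fun k _ => by positivity)
    (fun k _ => pairLikelihood_nonneg hp₁0.le (hle.trans hp₂1.le) (hp₁0.le.trans hle) hp₂1.le k)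
    ((pairLikelihood_antitoneOn hp₁0.le hle hp₂1.le).mono ?_) c
  rintro k ⟨hk, hchoose⟩
  simp only [ne_eq, mul_eq_zero, Nat.cast_eq_zero, Nat.choose_eq_zero_iff, not_or,
    not_lt] at hchoose
  rw [mem_range] at hk
  simp only [Set.mem_Icc, le_min_iff]
  omega

/-- **Stochastic monotonicity for Fisher's test under the alternative.**
Let `C₁ ~ Binomial(n, p₁)` and `C₂ ~ Binomial(n, p₂)` be independent with
`0 < p₁ ≤ p₂ < 1`.  Then for every `s ≤ 2n` and every threshold `c`,
`P(C₁ ≥ c | C₁ + C₂ = s) ≤ P(H ≥ c)` where `H ~ Hypergeometric(2n, n, s)`, i.e. the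
conditional upper tail is dominated by the central hypergeometric upper tail
`(Σ_{k ≥ c} C(n,k)·C(n,s−k)) / C(2n,s)`. -/
theorem fisher_tail_monotone
    {Ω : Type*} [MeasurableSpace Ω] (μ : Measure Ω) [IsProbabilityMeasure μ]
    (n s : ℕ) (hs : s ≤ 2 * n)
    (p₁ p₂ : ℝ) (hp₁0 : 0 < p₁) (hp₂1 : p₂ < 1) (hle : p₁ ≤ p₂)
    (hp₁1 : p₁ < 1) (hp₂0 : 0 < p₂)
    (C₁ C₂ : Ω → ℕ) (hm₁ : Measurable C₁) (hm₂ : Measurable C₂)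
    (hindep : IndepFun C₁ C₂ μ)
    (h₁ : ∀ k, (μ {ω | C₁ ω = k}).toReal = (n.choose k : ℝ) * p₁ ^ k * (1 - p₁) ^ (n - k))
    (h₂ : ∀ k, (μ {ω | C₂ ω = k}).toReal = (n.choose k : ℝ) * p₂ ^ k * (1 - p₂) ^ (n - k)) :
    ∀ c : ℕ,
      (μ ({ω | c ≤ C₁ ω} ∩ {ω | C₁ ω + C₂ ω = s})).toReal /
          (μ {ω | C₁ ω + C₂ ω = s}).toReal ≤
        (∑ k ∈ Finset.range (s + 1),
          if c ≤ k then (n.choose k : ℝ) * (n.choose (s - k)) else 0) /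
          ((2 * n).choose s) :=
  fisher_tail_monotone_general μ n s p₁ p₂ hp₁0 hp₂1 hle C₁ C₂ hm₁ hm₂ hindep h₁ h₂
end
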